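/- arXiv:1005.3192 — 6 statements merged into one kernel-verified Lean document; each statement's English description precedes it below -/
import Mathlib

section
/- Let W be a module with complementary pairs a ⊤ u, a ⊤ x, b ⊤ v, b ⊤ z. Then the operators L_{xavb} := 1 − P_a^x P_v^b and R_{aubz} := 1 − P_b^z P_u^a commute, and their product equals M_{xabz} M_{uabv} where M_{xabz} := P_x^a − P_b^z; that is, L_{xavb} ∘ R_{aubz} = (P_x^a − P_b^z) ∘ (P_u^a − P_b^v) = R_{aubz} ∘ L_{xavb}. -/
/-! Write `p = P_x^a`, `q = P_u^a`, `s = P_v^b`, `t = P_z^b`. Projectors with a common kernel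
absorb each other (`p q = p`, `q p = q`, `s t = s`, `t s = t`), and `P_a^x = 1 - p` etc.
Expanded, each product differs from `(p - (1 - t)) (q - (1 - s))` only by multiples of
`s (1 - t)` or `q (1 - p)` and by `p - p q`, `t - t s`, all of which vanish. -/

/-- The projector of `W` onto `x` along `a`, as an endomorphism of `W`. -/
noncomputable def prj {R : Type*} [Ring R] {W : Type*} [AddCommGroup W] [Module R W]
    (x a : Submodule R W) (h : IsCompl x a) : W →ₗ[R] W :=
  x.subtype ∘ₗ x.linearProjOfIsCompl a h

section Ring

variable {A : Type*} [Ring A] {p q s t : A}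

theorem fundamental_relation_of_mul_eq (hpq : p * q = p) (hqp : q * p = q)
    (hst : s * t = s) (hts : t * s = t) :
    (1 - (1 - p) * s) * (1 - (1 - t) * q) = (p - (1 - t)) * (q - (1 - s)) ∧
      (1 - (1 - t) * q) * (1 - (1 - p) * s) = (p - (1 - t)) * (q - (1 - s)) := by
  have hs : s * (1 - t) = 0 := by rw [mul_one_sub, hst, sub_self]
  have hq : q * (1 - p) = 0 := by rw [mul_one_sub, hqp, sub_self]
  constructor
  · calc (1 - (1 - p) * s) * (1 - (1 - t) * q)
          = (p - (1 - t)) * (q - (1 - s)) + (1 - p) * (s * (1 - t)) * q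
            + (p - p * q) + (t - t * s) := by noncomm_ring
      _ = (p - (1 - t)) * (q - (1 - s)) := by simp [hs, hpq, hts]
  · calc (1 - (1 - t) * q) * (1 - (1 - p) * s)
          = (p - (1 - t)) * (q - (1 - s)) + (1 - t) * (q * (1 - p)) * s
            + (p - p * q) + (t - t * s) := by noncomm_ring
      _ = (p - (1 - t)) * (q - (1 - s)) := by simp [hq, hpq, hts]

end Ring

section Projector

variable {R : Type*} [Ring R] {W : Type*} [AddCommGroup W] [Module R W]

theorem prj_eq_projection (x a : Submodule R W) (h : IsCompl x a) :
    prj x a h = x.projection a h :=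
  rfl

theorem prj_symm (x a : Submodule R W) (h : IsCompl x a) :
    prj a x h.symm = LinearMap.id - prj x a h :=
  Submodule.projection_eq_id_sub_projection h

theorem prj_comp_prj (x u a : Submodule R W) (hxa : IsCompl x a) (hua : IsCompl u a) :
    prj x a hxa ∘ₗ prj u a hua = prj x a hxa :=
  (LinearMap.IsIdempotentElem.comp_eq_left_iff
    (Submodule.isIdempotentElem_projection hua) _).mpr <| by
      simp only [prj_eq_projection, Submodule.ker_projection, le_rfl]

end Projector

/-- Fundamental relation: with `L_{xavb} = 1 − P_a^x P_v^b`, `R_{aubz} = 1 − P_b^z P_u^a`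
and `M_{xabz} = P_x^a − P_b^z`, one has `L ∘ R = M_{xabz} ∘ M_{uabv} = R ∘ L`. -/
theorem fundamental_relation {R : Type*} [Ring R] {W : Type*} [AddCommGroup W]
    [Module R W] (x a u v b z : Submodule R W)
    (hxa : IsCompl x a) (hua : IsCompl u a) (hvb : IsCompl v b) (hzb : IsCompl z b) :
    let L : W →ₗ[R] W := LinearMap.id - prj a x hxa.symm ∘ₗ prj v b hvb
    let Rop : W →ₗ[R] W := LinearMap.id - prj b z hzb.symm ∘ₗ prj u a hua
    let M₁ : W →ₗ[R] W := prj x a hxa - prj b z hzb.symm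
    let M₂ : W →ₗ[R] W := prj u a hua - prj b v hvb.symm
    L ∘ₗ Rop = M₁ ∘ₗ M₂ ∧ Rop ∘ₗ L = M₁ ∘ₗ M₂ := by
  intro L Rop M₁ M₂
  simp only [L, Rop, M₁, M₂]
  rw [prj_symm x a hxa, prj_symm z b hzb, prj_symm v b hvb]
  -- in `Module.End R W`, `1` is `LinearMap.id` and `*` is `∘ₗ` by definition
  exact fundamental_relation_of_mul_eq (prj_comp_prj x u a hxa hua)
    (prj_comp_prj u x a hua hxa) (prj_comp_prj v z b hvb hzb) (prj_comp_prj z v b hzb hvb)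
end

section
/- Let W be a module, a, b submodules, and x, z common complements of both a and b. Then the operator M_{xabz} := P_x^a − P_b^z is invertible with inverse M_{zabx} := P_z^a − P_b^x. -/
section aux
variable {R : Type*} [Ring R] {W : Type*} [AddCommGroup W] [Module R W]

lemma prj_mem (x a : Submodule R W) (h : IsCompl x a) (w : W) : prj x a h w ∈ x :=
  (x.linearProjOfIsCompl a h w).2

lemma prj_apply_left (x a : Submodule R W) (h : IsCompl x a) {w : W} (hw : w ∈ x) :
    prj x a h w = w := by
  exact congrArg Subtype.val (Submodule.projectionOnto_apply_of_mem_left h hw)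

lemma prj_apply_right (x a : Submodule R W) (h : IsCompl x a) {w : W} (hw : w ∈ a) :
    prj x a h w = 0 := by
  show x.subtype (x.projectionOnto a h w) = 0
  rw [Submodule.projectionOnto_apply_of_mem_right h hw, map_zero]

lemma sub_prj_mem (x a : Submodule R W) (h : IsCompl x a) (w : W) : w - prj x a h w ∈ a := by
  have h0 := Submodule.projection_add_projection_eq_self h w
  have h2 : w - prj x a h w = (a.linearProjOfIsCompl x h.symm w : W) :=
    sub_eq_iff_eq_add'.2 h0.symm
  rw [h2]; exact (a.linearProjOfIsCompl x h.symm w).2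

lemma prj_key (x z a b : Submodule R W)
    (hxa : IsCompl x a) (hxb : IsCompl x b) (hza : IsCompl z a) (hzb : IsCompl z b) (w : W) :
    (prj x a hxa - prj b z hzb.symm) ((prj z a hza - prj b x hxb.symm) w) = w := by
  simp only [LinearMap.sub_apply, map_sub]
  have h1 : prj x a hxa (prj z a hza w) = prj x a hxa w := by
    have h := prj_apply_right x a hxa (sub_prj_mem z a hza w)
    rw [map_sub] at h
    exact (sub_eq_zero.1 h).symm
  have h2 : prj b z hzb.symm (prj z a hza w) = 0 :=
    prj_apply_right b z hzb.symm (prj_mem z a hza w)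
  have h3 : prj b z hzb.symm (prj b x hxb.symm w) = prj b x hxb.symm w :=
    prj_apply_left b z hzb.symm (prj_mem b x hxb.symm w)
  have h4 : prj x a hxa (prj b x hxb.symm w)
      = prj x a hxa w - (w - prj b x hxb.symm w) := by
    have h := prj_apply_left x a hxa (sub_prj_mem b x hxb.symm w)
    rw [map_sub] at h
    rw [sub_eq_iff_eq_add] at h
    rw [h]; abel
  rw [h1, h2, h3, h4]; abel

end aux

/-- If `x, z` are common complements of `a` and `b`, then `M_{xabz} = P_x^a − P_b^z`
is invertible with inverse `M_{zabx} = P_z^a − P_b^x`. -/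
theorem middle_mult_invertible {R : Type*} [Ring R] {W : Type*} [AddCommGroup W]
    [Module R W] (x z a b : Submodule R W)
    (hxa : IsCompl x a) (hxb : IsCompl x b) (hza : IsCompl z a) (hzb : IsCompl z b) :
    (prj x a hxa - prj b z hzb.symm) ∘ₗ (prj z a hza - prj b x hxb.symm) = LinearMap.id ∧
    (prj z a hza - prj b x hxb.symm) ∘ₗ (prj x a hxa - prj b z hzb.symm) = LinearMap.id := by
  constructor <;> ext w
  · exact prj_key x z a b hxa hxb hza hzb w
  · exact prj_key z x a b hza hzb hxa hxb w
end

section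
/- Let W be a module and define Γ(x,a,y,b,z) := {ω ∈ W | ∃ α ∈ a, ∃ β ∈ b, ω + α ∈ z ∧ ω + α + β ∈ y ∧ ω + β ∈ x} for submodules x,a,y,b,z. Then Γ is invariant under the Klein four-group acting on (x,a,b,z): Γ(x,a,y,b,z) = Γ(z,b,y,a,x) and Γ(x,a,y,b,z) = Γ(a,x,y,z,b). -/
/-- The quintary Grassmannian product:
`Γ(x,a,y,b,z) = {ω | ∃ α ∈ a, ∃ β ∈ b, ω + α ∈ z ∧ ω + α + β ∈ y ∧ ω + β ∈ x}`,
as a submodule of `W`. -/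
def Gamma {R : Type*} [Ring R] {W : Type*} [AddCommGroup W] [Module R W]
    (x a y b z : Submodule R W) : Submodule R W where
  carrier := {ω : W | ∃ α ∈ a, ∃ β ∈ b, ω + α ∈ z ∧ ω + α + β ∈ y ∧ ω + β ∈ x}
  zero_mem' := ⟨0, a.zero_mem, 0, b.zero_mem, by simp, by simp, by simp⟩
  add_mem' := by
    rintro ω ω' ⟨α, hα, β, hβ, h1, h2, h3⟩ ⟨α', hα', β', hβ', h1', h2', h3'⟩
    refine ⟨α + α', a.add_mem hα hα', β + β', b.add_mem hβ hβ', ?_, ?_, ?_⟩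
    · rw [show ω + ω' + (α + α') = (ω + α) + (ω' + α') by abel]
      exact z.add_mem h1 h1'
    · rw [show ω + ω' + (α + α') + (β + β') = (ω + α + β) + (ω' + α' + β') by abel]
      exact y.add_mem h2 h2'
    · rw [show ω + ω' + (β + β') = (ω + β) + (ω' + β') by abel]
      exact x.add_mem h3 h3'
  smul_mem' := by
    rintro c ω ⟨α, hα, β, hβ, h1, h2, h3⟩
    refine ⟨c • α, a.smul_mem c hα, c • β, b.smul_mem c hβ, ?_, ?_, ?_⟩
    · rw [← smul_add]; exact z.smul_mem c h1
    · rw [show c • ω + c • α + c • β = c • (ω + α + β) by rw [smul_add, smul_add]]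
      exact y.smul_mem c h2
    · rw [← smul_add]; exact x.smul_mem c h3


section

variable {R : Type*} [Ring R] {W : Type*} [AddCommGroup W] [Module R W]

theorem Gamma_le_swap (x a y b z : Submodule R W) : Gamma x a y b z ≤ Gamma z b y a x := by
  rintro ω ⟨α, hα, β, hβ, hz, hy, hx⟩
  exact ⟨β, hβ, α, hα, hx, by rwa [add_right_comm], hz⟩

/- The new witnesses are `-(ω + β) ∈ x` and `-(ω + α) ∈ z`; the three sums then become
`-β`, `-(ω + α + β)` and `-α`. -/
theorem Gamma_le_flip (x a y b z : Submodule R W) : Gamma x a y b z ≤ Gamma a x y z b := by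
  rintro ω ⟨α, hα, β, hβ, hz, hy, hx⟩
  refine ⟨-(ω + β), neg_mem hx, -(ω + α), neg_mem hz, ?_, ?_, ?_⟩
  · convert neg_mem hβ using 1; abel
  · convert neg_mem hy using 1; abel
  · convert neg_mem hα using 1; abel

end

/-- `Γ` is invariant under the Klein four-group acting on `(x,a,b,z)`:
`Γ(x,a,y,b,z) = Γ(z,b,y,a,x)` and `Γ(x,a,y,b,z) = Γ(a,x,y,z,b)`. -/
theorem Gamma_klein_symmetry {R : Type*} [Ring R] {W : Type*} [AddCommGroup W]
    [Module R W] (x a y b z : Submodule R W) :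
    Gamma x a y b z = Gamma z b y a x ∧ Gamma x a y b z = Gamma a x y z b :=
  ⟨(Gamma_le_swap x a y b z).antisymm (Gamma_le_swap z b y a x),
    (Gamma_le_flip x a y b z).antisymm (Gamma_le_flip a x y z b)⟩
end

section
/- Let W be a module and Γ(x,a,y,b,z) := {ω ∈ W | ∃ α ∈ a, ∃ β ∈ b, ω + α ∈ z ∧ ω + α + β ∈ y ∧ ω + β ∈ x}. Then for fixed submodules a, b, the ternary product (x y z) := Γ(x,a,y,b,z) on the lattice of submodules of W satisfies the para-associative law: Γ(x,a,u,b,Γ(y,a,v,b,z)) = Γ(x,a,Γ(v,a,y,b,u),b,z) = Γ(Γ(x,a,u,b,y),a,v,b,z). -/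
section Gamma

variable {R : Type*} [Ring R] {W : Type*} [AddCommGroup W] [Module R W]

theorem Gamma_comm (x a y b z : Submodule R W) : Gamma x a y b z = Gamma z b y a x := by
  ext ω
  constructor <;>
  · rintro ⟨α, hα, β, hβ, hz, hy, hx⟩
    exact ⟨β, hβ, α, hα, hx, by rwa [add_right_comm], hz⟩

theorem Gamma_Gamma_right (a b x u y v z : Submodule R W) :
    Gamma x a u b (Gamma y a v b z) = Gamma x a (Gamma v a y b u) b z := by
  ext ω
  constructor
  · rintro ⟨α, hα, β, hβ, ⟨α', hα', β', hβ', hz, hv, hy⟩, hu, hx⟩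
    refine ⟨α + α', add_mem hα hα', β, hβ, by rwa [← add_assoc],
      ⟨-α', neg_mem hα', β' - β, sub_mem hβ' hβ, ?_, ?_, ?_⟩, hx⟩
    · convert hu using 1; abel
    · convert hy using 1; abel
    · convert hv using 1; abel
  · rintro ⟨α, hα, β, hβ, hz, ⟨α', hα', β', hβ', hu, hy, hv⟩, hx⟩
    refine ⟨α + α', add_mem hα hα', β, hβ,
      ⟨-α', neg_mem hα', β + β', add_mem hβ hβ', ?_, ?_, ?_⟩, ?_, hx⟩
    · convert hz using 1; abel
    · convert hv using 1; abel
    · convert hy using 1; abel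
    · convert hu using 1; abel

theorem Gamma_Gamma_left (a b x u y v z : Submodule R W) :
    Gamma (Gamma x a u b y) a v b z = Gamma x a (Gamma v a y b u) b z := by
  rw [Gamma_comm, Gamma_comm x, Gamma_Gamma_right, Gamma_comm _ b, Gamma_comm u]

end Gamma

/-- For fixed `a, b`, the ternary product `(x y z) := Γ(x,a,y,b,z)` on the lattice of
submodules satisfies the para-associative law (semitorsor property). -/
theorem Gamma_semitorsor {R : Type*} [Ring R] {W : Type*} [AddCommGroup W]
    [Module R W] (a b x u y v z : Submodule R W) :
    Gamma x a u b (Gamma y a v b z) = Gamma x a (Gamma v a y b u) b z ∧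
    Gamma x a (Gamma v a y b u) b z = Gamma (Gamma x a u b y) a v b z :=
  ⟨Gamma_Gamma_right a b x u y v z, (Gamma_Gamma_left a b x u y v z).symm⟩
end

section
/- Let W be a module and Γ as defined by Γ(x,a,y,b,z) := {ω | ∃ α ∈ a, β ∈ b, ω + α ∈ z, ω + α + β ∈ y, ω + β ∈ x}. Then for all submodules x, a, b, z of W: Γ(x,a,x,b,z) = (z ⊔ (x ⊓ a)) ⊓ (b ⊔ x), where ⊔ and ⊓ are sum and intersection of submodules. -/
namespace Gamma

variable {R : Type*} [Ring R] {W : Type*} [AddCommGroup W] [Module R W]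
  {x a y b z : Submodule R W}

theorem le_inf_sup : Gamma x a y b z ≤ (z ⊔ ((x ⊔ y) ⊓ a)) ⊓ (b ⊔ x) := by
  rintro ω ⟨α, hα, β, hβ, hz, hy, hx⟩
  have hαxy : α ∈ x ⊔ y := by
    have := Submodule.sub_mem_sup hy hx
    rwa [add_sub_add_right_eq_sub, add_sub_cancel_left, sup_comm] at this
  refine ⟨?_, ?_⟩
  · rw [← add_sub_cancel_right ω α]
    exact Submodule.sub_mem_sup hz ⟨hαxy, hα⟩
  · rw [← add_sub_cancel_right ω β, sub_eq_neg_add]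
    exact Submodule.add_mem_sup (b.neg_mem hβ) hx

theorem inf_sup_le : (z ⊔ (x ⊓ y ⊓ a)) ⊓ (b ⊔ (x ⊓ y)) ≤ Gamma x a y b z := by
  rintro ω ⟨hza, hbx⟩
  obtain ⟨u, hu, v, ⟨⟨-, hvy⟩, hva⟩, huv⟩ := Submodule.mem_sup.mp hza
  obtain ⟨β, hβ, w, ⟨hwx, hwy⟩, hβw⟩ := Submodule.mem_sup.mp hbx
  have hωβ : ω + -β = w := by rw [← hβw]; abel
  refine ⟨-v, a.neg_mem hva, -β, b.neg_mem hβ, ?_, ?_, hωβ ▸ hwx⟩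
  · rwa [← huv, add_neg_cancel_right]
  · rw [add_right_comm, hωβ]
    exact y.add_mem hwy (y.neg_mem hvy)

end Gamma

/-- Diagonal value on `x = y`: `Γ(x,a,x,b,z) = (z ⊔ (x ⊓ a)) ⊓ (b ⊔ x)`. -/
theorem Gamma_diagonal_x_eq_y {R : Type*} [Ring R] {W : Type*} [AddCommGroup W]
    [Module R W] (x a b z : Submodule R W) :
    Gamma x a x b z = (z ⊔ (x ⊓ a)) ⊓ (b ⊔ x) := by
  apply le_antisymm
  · simpa only [sup_idem] using (Gamma.le_inf_sup : Gamma x a x b z ≤ _)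
  · simpa only [inf_idem] using (Gamma.inf_sup_le : _ ≤ Gamma x a x b z)
end

section
/- Let W be a module and Γ as above. Then for all submodules x, a, y, b of W: Γ(x,a,y,b,a) = a ⊓ (b ⊔ (x ⊓ (y ⊔ a))) and Γ(x,a,y,b,b) = b ⊔ (a ⊓ (x ⊔ (y ⊓ b))). -/
/-- Diagonal values on `a = z` and on `b = z`:
`Γ(x,a,y,b,a) = a ⊓ (b ⊔ (x ⊓ (y ⊔ a)))` and `Γ(x,a,y,b,b) = b ⊔ (a ⊓ (x ⊔ (y ⊓ b)))`. -/
theorem Gamma_diagonal_values {R : Type*} [Ring R] {W : Type*} [AddCommGroup W]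
    [Module R W] (x a y b : Submodule R W) :
    Gamma x a y b a = a ⊓ (b ⊔ (x ⊓ (y ⊔ a))) ∧
    Gamma x a y b b = b ⊔ (a ⊓ (x ⊔ (y ⊓ b))) := by
  constructor
  · ext ω
    constructor
    · rintro ⟨α, hα, β, hβ, h1, h2, h3⟩
      refine ⟨?_, ?_⟩
      · have := a.sub_mem h1 hα; simpa using this
      · simp only [SetLike.mem_coe] at *; rw [Submodule.mem_sup]
        refine ⟨-β, b.neg_mem hβ, ω + β, ⟨h3, ?_⟩, by abel⟩
        simp only [SetLike.mem_coe] at *; rw [Submodule.mem_sup]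
        exact ⟨ω + α + β, h2, -α, a.neg_mem hα, by abel⟩
    · rintro ⟨hωa, hω⟩
      simp only [SetLike.mem_coe] at *; rw [Submodule.mem_sup] at hω
      obtain ⟨β', hβ', v, ⟨hvx, hv⟩, rfl⟩ := hω
      rw [SetLike.mem_coe, Submodule.mem_sup] at hv
      obtain ⟨η, hη, α'', hα'', rfl⟩ := hv
      refine ⟨-α'', a.neg_mem hα'', -β', b.neg_mem hβ', ?_, ?_, ?_⟩
      · exact a.add_mem hωa (a.neg_mem hα'')
      · rw [show β' + (η + α'') + -α'' + -β' = η by abel]; exact hη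
      · rw [show β' + (η + α'') + -β' = η + α'' by abel]; exact hvx
  · ext ω
    constructor
    · rintro ⟨α, hα, β, hβ, h1, h2, h3⟩
      rw [Submodule.mem_sup]
      refine ⟨ω + α, h1, -α, ⟨a.neg_mem hα, ?_⟩, by abel⟩
      rw [SetLike.mem_coe, Submodule.mem_sup]
      refine ⟨ω + β, h3, -(ω + α + β), ⟨y.neg_mem h2, ?_⟩, by abel⟩
      exact b.neg_mem (by simpa [add_right_comm] using b.add_mem h1 hβ)
    · intro hω
      rw [Submodule.mem_sup] at hω
      obtain ⟨β₀, hβ₀, u, ⟨hua, hu⟩, rfl⟩ := hω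
      rw [SetLike.mem_coe, Submodule.mem_sup] at hu
      obtain ⟨ξ, hξ, η, ⟨hηy, hηb⟩, rfl⟩ := hu
      refine ⟨-(ξ + η), a.neg_mem hua, -β₀ - η, b.sub_mem (b.neg_mem hβ₀) hηb, ?_, ?_, ?_⟩
      · rw [show β₀ + (ξ + η) + -(ξ + η) = β₀ by abel]; exact hβ₀
      · rw [show β₀ + (ξ + η) + -(ξ + η) + (-β₀ - η) = -η by abel]; exact y.neg_mem hηy
      · rw [show β₀ + (ξ + η) + (-β₀ - η) = ξ by abel]; exact hξ
end
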